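/- Characterization of the null of zero local conditional distribution treatment effect without censoring: under the instrumental-variable assumptions, the following are equivalent: (a) for every y ∈ ℝ, E[(1{Y(1) ≤ y} − 1{Y(0) ≤ y}) · (T(1) − T(0)) | σ(X)] = 0 ℙ-almost surely; (b) for every y ∈ ℝ and every x ∈ ℝ^k, E[(Z / q(X) − (1 − Z) / (1 − q(X))) · 1{Y ≤ y} · 1{X ≤ x}] = 0. -/

import Mathlib

/-!
Write `U₁ = Y(T(1))` and `U₀ = Y(T(0))` for the outcomes the unit would show under `Z = 1` and
`Z = 0`. Then `Y = Z U₁ + (1 - Z) U₀`, and since `T(0), T(1)` are binary,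
`(1{Y(1) ≤ y} - 1{Y(0) ≤ y}) (T(1) - T(0)) = 1{U₁ ≤ y} - 1{U₀ ≤ y}`. As `(U₀, U₁)` is a function
of the potential outcomes, conditional independence gives
`E[Z 1{U₁ ≤ y} | X] = q(X) E[1{U₁ ≤ y} | X]` (and likewise for `1 - Z`), so inverse propensity
weighting turns the instrument contrast in (b) into the compliers' contrast:
`E[(Z/q(X) - (1-Z)/(1-q(X))) 1{Y ≤ y} | X] = E[(1{Y(1) ≤ y} - 1{Y(0) ≤ y}) (T(1) - T(0)) | X]`.
Finally, a `σ(X)`-conditional expectation vanishes iff the finite signed measure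
`A ↦ E[· ; X ∈ A]` on `ℝ^k` does, and such a measure is determined by its values on the
orthants `{u | u ≤ x}`.
-/

open MeasureTheory ProbabilityTheory Set Filter

theorem MeasurableSpace.pi_eq_generateFrom_Iic {ι : Type*} [Finite ι] :
    (MeasurableSpace.pi : MeasurableSpace (ι → ℝ)) = .generateFrom (range Iic) := by
  have hC : IsCountablySpanning (range (Iic : ℝ → Set ℝ)) :=
    ⟨fun n : ℕ => Iic (n : ℝ), fun n => mem_range_self _,
      eq_univ_of_forall fun y => mem_iUnion.2 (exists_nat_ge y)⟩
  rw [← generateFrom_eq_pi (fun _ => (borel_eq_generateFrom_Iic ℝ).symm) fun _ => hC]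
  congr 1
  ext s
  constructor
  · rintro ⟨t, ht, rfl⟩
    choose x hx using fun i => ht i (mem_univ i)
    exact ⟨x, by simp_rw [← pi_univ_Iic, hx]⟩
  · rintro ⟨x, rfl⟩
    exact ⟨fun i => Iic (x i), fun i _ => mem_range_self _, pi_univ_Iic x⟩

namespace MeasureTheory.VectorMeasure

theorem ext_of_Iic_pi {ι M : Type*} [Finite ι] [AddCommGroup M] [TopologicalSpace M]
    [T2Space M] {v w : VectorMeasure (ι → ℝ) M} (h : ∀ x, v (Iic x) = w (Iic x)) : v = w := by
  refine ext_of_generateFrom _ (by rintro _ ⟨x, rfl⟩; exact h x)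
    MeasurableSpace.pi_eq_generateFrom_Iic ?_ ?_
  · rintro _ ⟨x, rfl⟩ _ ⟨x', rfl⟩ -
    exact ⟨x ⊓ x', Iic_inter_Iic.symm⟩
  · have hmono : Monotone fun n : ℕ => Iic (fun _ : ι => (n : ℝ)) :=
      fun a b hab => Iic_subset_Iic.2 fun _ => Nat.cast_le.2 hab
    have hU : (⋃ n : ℕ, Iic (fun _ : ι => (n : ℝ))) = univ :=
      eq_univ_of_forall fun u => mem_iUnion.2
        (eventually_all.2 fun i => tendsto_natCast_atTop_atTop.eventually_ge_atTop (u i)).exists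
    have hv := tendsto_vectorMeasure_iUnion_atTop_nat (v := v) hmono fun _ => measurableSet_Iic
    have hw := tendsto_vectorMeasure_iUnion_atTop_nat (v := w) hmono fun _ => measurableSet_Iic
    simp only [h, hU] at hv hw
    exact tendsto_nhds_unique hv hw

theorem ext_iff_Iic_pi {ι M : Type*} [Finite ι] [AddCommGroup M] [TopologicalSpace M]
    [T2Space M] {v w : VectorMeasure (ι → ℝ) M} : v = w ↔ ∀ x, v (Iic x) = w (Iic x) :=
  ⟨fun h _ => h ▸ rfl, ext_of_Iic_pi⟩

end MeasureTheory.VectorMeasure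

section CondExp

variable {Ω : Type*} {m mΩ : MeasurableSpace Ω} {μ : Measure Ω}

theorem condExp_ae_eq_condExp_iff (hm : m ≤ mΩ) [SigmaFinite (μ.trim hm)] {f g : Ω → ℝ}
    (hf : Integrable f μ) (hg : Integrable g μ) :
    μ[f | m] =ᵐ[μ] μ[g | m] ↔ ∀ s, MeasurableSet[m] s → ∫ ω in s, f ω ∂μ = ∫ ω in s, g ω ∂μ := by
  refine ⟨fun h s hs => ?_, fun h => ?_⟩
  · rw [← setIntegral_condExp hm hf hs, ← setIntegral_condExp hm hg hs]
    exact integral_congr_ae (ae_restrict_of_ae h)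
  · refine ae_eq_condExp_of_forall_setIntegral_eq hm hg
      (fun _ _ _ => integrable_condExp.integrableOn) (fun s hs _ => ?_)
      stronglyMeasurable_condExp.aestronglyMeasurable
    rw [setIntegral_condExp hm hf hs, h s hs]

theorem condExp_comap_ae_eq_iff_map_withDensityᵥ_eq {β : Type*} [MeasurableSpace β]
    [IsFiniteMeasure μ] {X : Ω → β} (hX : Measurable X) {f g : Ω → ℝ}
    (hf : Integrable f μ) (hg : Integrable g μ) :
    μ[f | .comap X inferInstance] =ᵐ[μ] μ[g | .comap X inferInstance] ↔
      (μ.withDensityᵥ f).map X = (μ.withDensityᵥ g).map X := by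
  rw [condExp_ae_eq_condExp_iff hX.comap_le hf hg, VectorMeasure.ext_iff]
  simp only [MeasurableSpace.measurableSet_comap, forall_exists_index, and_imp,
    forall_apply_eq_imp_iff₂]
  refine forall₂_congr fun A hA => ?_
  rw [VectorMeasure.map_apply _ hX hA, VectorMeasure.map_apply _ hX hA,
    withDensityᵥ_apply hf (hX hA), withDensityᵥ_apply hg (hX hA)]

theorem integral_mul_ite_le_eq_map_withDensityᵥ_Iic [IsFiniteMeasure μ] {ι : Type*} [Finite ι]
    {X : Ω → ι → ℝ} (hX : Measurable X) {f : Ω → ℝ} (hf : Integrable f μ) (x : ι → ℝ)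
    [DecidablePred fun ω => ∀ j, X ω j ≤ x j] :
    ∫ ω, f ω * (if ∀ j, X ω j ≤ x j then (1 : ℝ) else 0) ∂μ =
      (μ.withDensityᵥ f).map X (Iic x) := by
  rw [VectorMeasure.map_apply _ hX measurableSet_Iic,
    withDensityᵥ_apply hf (hX measurableSet_Iic), ← integral_indicator (hX measurableSet_Iic)]
  congr 1 with ω
  by_cases h : ∀ j, X ω j ≤ x j <;> simp [h, Pi.le_def]

theorem condExp_comap_ae_eq_zero_iff_forall_integral_mul_ite_le [IsFiniteMeasure μ]
    {ι : Type*} [Finite ι] {X : Ω → ι → ℝ} (hX : Measurable X)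
    [∀ x : ι → ℝ, DecidablePred fun ω => ∀ j, X ω j ≤ x j] {f g : Ω → ℝ}
    (hf : Integrable f μ) (hg : Integrable g μ)
    (hfg : μ[f | .comap X inferInstance] =ᵐ[μ] μ[g | .comap X inferInstance]) :
    μ[g | .comap X inferInstance] =ᵐ[μ] 0 ↔
      ∀ x : ι → ℝ, ∫ ω, f ω * (if ∀ j, X ω j ≤ x j then (1 : ℝ) else 0) ∂μ = 0 := by
  have h := condExp_comap_ae_eq_iff_map_withDensityᵥ_eq hX hg (integrable_zero _ _ μ)
  rw [condExp_zero, withDensityᵥ_zero, VectorMeasure.map_zero,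
    ← (condExp_comap_ae_eq_iff_map_withDensityᵥ_eq hX hf hg).1 hfg,
    VectorMeasure.ext_iff_Iic_pi] at h
  simp only [h, integral_mul_ite_le_eq_map_withDensityᵥ_Iic hX hf, zero_apply]

theorem integrable_inv_mul_of_le {p f : Ω → ℝ} {ε : ℝ} (hε : 0 < ε)
    (hp : AEStronglyMeasurable p μ) (hpε : ∀ᵐ ω ∂μ, ε ≤ p ω) (hf : Integrable f μ) :
    Integrable (p⁻¹ * f) μ :=
  hf.bdd_mul hp.aemeasurable.inv.aestronglyMeasurable (c := ε⁻¹) <| by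
    filter_upwards [hpε] with ω h
    rw [Pi.inv_apply, norm_inv, Real.norm_of_nonneg (hε.le.trans h)]
    exact inv_anti₀ hε h

theorem condExp_inv_mul_of_condExp_eq_mul (hm : m ≤ mΩ) {p f g : Ω → ℝ} {ε : ℝ} (hε : 0 < ε)
    (hp : StronglyMeasurable[m] p) (hpε : ∀ᵐ ω ∂μ, ε ≤ p ω) (hf : Integrable f μ)
    (h : μ[f | m] =ᵐ[μ] p * g) : μ[p⁻¹ * f | m] =ᵐ[μ] g := by
  have hpf := integrable_inv_mul_of_le hε (hp.mono hm).aestronglyMeasurable hpε hf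
  have hpull := condExp_mul_of_stronglyMeasurable_left hp.measurable.inv.stronglyMeasurable hpf hf
  filter_upwards [hpull, h, hpε] with ω h₁ h₂ h₃
  rw [h₁, Pi.mul_apply, h₂, Pi.mul_apply, Pi.inv_apply,
    inv_mul_cancel_left₀ (hε.trans_le h₃).ne']

end CondExp

section BinaryWeights

variable {Ω : Type*} {mΩ : MeasurableSpace Ω} {μ : Measure Ω} {R : Ω → ℝ}

theorem one_sub_eq_zero_or_one (hR01 : ∀ ω, R ω = 0 ∨ R ω = 1) (ω : Ω) :
    (1 - R) ω = 0 ∨ (1 - R) ω = 1 := by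
  rcases hR01 ω with h | h <;> simp [h]

theorem mul_indicator_one_eq_indicator_inter (hR01 : ∀ ω, R ω = 0 ∨ R ω = 1) (t : Set Ω) :
    R * t.indicator (fun _ => (1 : ℝ)) = (t ∩ R ⁻¹' {1}).indicator fun _ => 1 := by
  ext ω
  rcases hR01 ω with h | h <;> by_cases hω : ω ∈ t <;> simp [h, hω]

theorem integrable_mul_indicator_one [IsFiniteMeasure μ] (hR : Measurable R)
    (hR01 : ∀ ω, R ω = 0 ∨ R ω = 1) {t : Set Ω} (ht : MeasurableSet t) :
    Integrable (R * t.indicator fun _ => (1 : ℝ)) μ := by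
  rw [mul_indicator_one_eq_indicator_inter hR01]
  exact (integrable_const 1).indicator (ht.inter (hR (measurableSet_singleton 1)))

theorem integrable_ipw_arms [IsFiniteMeasure μ] (hR : Measurable R)
    (hR01 : ∀ ω, R ω = 0 ∨ R ω = 1) {p : Ω → ℝ} (hp : AEStronglyMeasurable p μ) {ε : ℝ} (hε : 0 < ε)
    (hpε : ∀ᵐ ω ∂μ, ε ≤ p ω ∧ p ω ≤ 1 - ε) {t₁ t₀ : Set Ω} (ht₁ : MeasurableSet t₁)
    (ht₀ : MeasurableSet t₀) :
    Integrable (p⁻¹ * (R * t₁.indicator fun _ => 1)) μ ∧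
      Integrable ((1 - p)⁻¹ * ((1 - R) * t₀.indicator fun _ => 1)) μ :=
  ⟨integrable_inv_mul_of_le hε hp (hpε.mono fun _ h => h.1)
    (integrable_mul_indicator_one hR hR01 ht₁), integrable_inv_mul_of_le hε
    (aestronglyMeasurable_const.sub hp) (hpε.mono fun _ h => le_sub_comm.1 h.2)
    (integrable_mul_indicator_one (measurable_const.sub hR) (one_sub_eq_zero_or_one hR01) ht₀)⟩

end BinaryWeights

section InverseProbabilityWeighting

variable {Ω β : Type*} {m mΩ : MeasurableSpace Ω} [StandardBorelSpace Ω] {hm : m ≤ mΩ}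
  {μ : Measure Ω} [IsFiniteMeasure μ] [MeasurableSpace β] {R : Ω → ℝ} {V : Ω → β} {s : Set β}

theorem condExp_mul_indicator_of_condIndepFun (hR : Measurable R)
    (hR01 : ∀ ω, R ω = 0 ∨ R ω = 1) (hV : Measurable V) (hind : CondIndepFun m hm V R μ)
    (hs : MeasurableSet s) :
    μ[R * (V ⁻¹' s).indicator (fun _ => (1 : ℝ)) | m] =ᵐ[μ] μ[R | m] * μ⟦V ⁻¹' s | m⟧ := by
  have key := (condIndepFun_iff_condExp_inter_preimage_eq_mul hV hR).1 hind s {1} hs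
    (measurableSet_singleton 1)
  have hR_eq : (R ⁻¹' {1}).indicator (fun _ => (1 : ℝ)) = R := by
    ext ω
    rcases hR01 ω with h | h <;> simp [h]
  rw [← mul_indicator_one_eq_indicator_inter hR01, hR_eq] at key
  filter_upwards [key] with ω h
  rw [h, mul_comm]
  rfl

theorem condExp_inv_mul_mul_indicator_of_condIndepFun (hR : Measurable R)
    (hR01 : ∀ ω, R ω = 0 ∨ R ω = 1) (hV : Measurable V) (hind : CondIndepFun m hm V R μ)
    {p : Ω → ℝ} (hp : StronglyMeasurable[m] p) (hpR : μ[R | m] =ᵐ[μ] p) {ε : ℝ} (hε : 0 < ε)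
    (hpε : ∀ᵐ ω ∂μ, ε ≤ p ω) (hs : MeasurableSet s) :
    μ[p⁻¹ * (R * (V ⁻¹' s).indicator fun _ => 1) | m] =ᵐ[μ] μ⟦V ⁻¹' s | m⟧ :=
  condExp_inv_mul_of_condExp_eq_mul hm hε hp hpε (integrable_mul_indicator_one hR hR01 (hV hs))
    ((condExp_mul_indicator_of_condIndepFun hR hR01 hV hind hs).trans (hpR.mul .rfl))

theorem condExp_ipw_contrast_ae_eq (hR : Measurable R) (hR01 : ∀ ω, R ω = 0 ∨ R ω = 1)
    (hV : Measurable V) (hind : CondIndepFun m hm V R μ) {p : Ω → ℝ}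
    (hp : StronglyMeasurable[m] p) (hpR : μ[R | m] =ᵐ[μ] p) {ε : ℝ} (hε : 0 < ε)
    (hpε : ∀ᵐ ω ∂μ, ε ≤ p ω ∧ p ω ≤ 1 - ε) {s₁ s₀ : Set β} (hs₁ : MeasurableSet s₁)
    (hs₀ : MeasurableSet s₀) :
    μ[p⁻¹ * (R * (V ⁻¹' s₁).indicator fun _ => 1)
        - (1 - p)⁻¹ * ((1 - R) * (V ⁻¹' s₀).indicator fun _ => 1) | m]
      =ᵐ[μ] μ[((V ⁻¹' s₁).indicator fun _ => 1) - (V ⁻¹' s₀).indicator fun _ => 1 | m] := by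
  have hind' : CondIndepFun m hm V (1 - R) μ :=
    hind.comp measurable_id (measurable_const.sub measurable_id)
  have hRint : Integrable R μ := .of_bound hR.aestronglyMeasurable 1 <| ae_of_all _ fun ω => by
    rcases hR01 ω with h | h <;> simp [h]
  have hpR' : μ[1 - R | m] =ᵐ[μ] 1 - p := by
    refine (condExp_sub (integrable_const 1) hRint m).trans ?_
    rw [show (1 : Ω → ℝ) = fun _ => 1 from rfl, condExp_const hm]
    exact EventuallyEq.rfl.sub hpR
  obtain ⟨hint₁, hint₀⟩ :=
    integrable_ipw_arms hR hR01 (hp.mono hm).aestronglyMeasurable hε hpε (hV hs₁) (hV hs₀)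
  refine (condExp_sub hint₁ hint₀ m).trans (EventuallyEq.trans ?_ (condExp_sub
    ((integrable_const 1).indicator (hV hs₁)) ((integrable_const 1).indicator (hV hs₀)) m).symm)
  exact (condExp_inv_mul_mul_indicator_of_condIndepFun hR hR01 hV hind hp hpR hε
    (hpε.mono fun _ h => h.1) hs₁).sub (condExp_inv_mul_mul_indicator_of_condIndepFun
    (measurable_const.sub hR) (one_sub_eq_zero_or_one hR01) hV hind'
    (stronglyMeasurable_const.sub hp) hpR' hε (hpε.mono fun _ h => le_sub_comm.1 h.2) hs₀)

end InverseProbabilityWeighting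

theorem ipw_weight_mul_ite_le {z u₁ u₀ q y : ℝ} (hz : z = 0 ∨ z = 1) :
    (z / q - (1 - z) / (1 - q)) * (if z * u₁ + (1 - z) * u₀ ≤ y then 1 else 0) =
      q⁻¹ * (z * if u₁ ≤ y then 1 else 0) - (1 - q)⁻¹ * ((1 - z) * if u₀ ≤ y then 1 else 0) := by
  rcases hz with rfl | rfl <;> by_cases h₀ : u₀ ≤ y <;> simp [h₀, div_eq_inv_mul]

theorem ite_le_sub_ite_le_mul_sub {a b y t₀ t₁ : ℝ} (ht₀ : t₀ = 0 ∨ t₀ = 1)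
    (ht₁ : t₁ = 0 ∨ t₁ = 1) :
    ((if a ≤ y then (1 : ℝ) else 0) - if b ≤ y then 1 else 0) * (t₁ - t₀) =
      (if t₁ * a + (1 - t₁) * b ≤ y then 1 else 0) -
        if t₀ * a + (1 - t₀) * b ≤ y then 1 else 0 := by
  rcases ht₀ with rfl | rfl <;> rcases ht₁ with rfl | rfl <;> simp

theorem zero_local_conditional_DTE_characterization_general
    {Ω : Type*} [MeasurableSpace Ω] [StandardBorelSpace Ω]
    (μ : Measure Ω) [IsProbabilityMeasure μ] {k : ℕ}
    (X : Ω → (Fin k → ℝ)) (hX : Measurable X)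
    (Z : Ω → ℝ) (hZ : Measurable Z) (hZ01 : ∀ ω, Z ω = 0 ∨ Z ω = 1)
    (T0 T1 : Ω → ℝ) (hT0 : Measurable T0) (hT1 : Measurable T1)
    (hT001 : ∀ ω, T0 ω = 0 ∨ T0 ω = 1) (hT101 : ∀ ω, T1 ω = 0 ∨ T1 ω = 1)
    (Y0 Y1 : Ω → ℝ) (hY0 : Measurable Y0) (hY1 : Measurable Y1)
    (T : Ω → ℝ) (hT : ∀ ω, T ω = Z ω * T1 ω + (1 - Z ω) * T0 ω)
    (Y : Ω → ℝ) (hY : ∀ ω, Y ω = T ω * Y1 ω + (1 - T ω) * Y0 ω)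
    (hiv : CondIndepFun (MeasurableSpace.comap X inferInstance) hX.comap_le
      (fun ω => (Y0 ω, Y1 ω, T0 ω, T1 ω)) Z μ)
    (ε : ℝ) (hε : 0 < ε)
    (q : (Fin k → ℝ) → ℝ) (hq : Measurable q)
    (hqX : (fun ω => q (X ω)) =ᵐ[μ] μ[Z | MeasurableSpace.comap X inferInstance])
    (hoverlap : ∀ᵐ ω ∂μ, ε ≤ q (X ω) ∧ q (X ω) ≤ 1 - ε) :
    (∀ y : ℝ,
        μ[(fun ω => ((if Y1 ω ≤ y then (1 : ℝ) else 0) - (if Y0 ω ≤ y then (1 : ℝ) else 0))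
              * (T1 ω - T0 ω)) | MeasurableSpace.comap X inferInstance]
          =ᵐ[μ] (0 : Ω → ℝ))
      ↔
    (∀ (y : ℝ) (x : Fin k → ℝ),
        (∫ ω, (Z ω / q (X ω) - (1 - Z ω) / (1 - q (X ω)))
            * (if Y ω ≤ y then (1 : ℝ) else 0)
            * (if ∀ j, X ω j ≤ x j then (1 : ℝ) else 0) ∂μ) = 0) := by
  -- `U = (Y(T(1)), Y(T(0)))`
  set U : Ω → ℝ × ℝ := fun ω =>
    (T1 ω * Y1 ω + (1 - T1 ω) * Y0 ω, T0 ω * Y1 ω + (1 - T0 ω) * Y0 ω) with hU_def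
  have hU : Measurable U := by fun_prop
  have hind : CondIndepFun _ hX.comap_le U Z μ :=
    hiv.comp (φ := fun v => (v.2.2.2 * v.2.1 + (1 - v.2.2.2) * v.1,
      v.2.2.1 * v.2.1 + (1 - v.2.2.1) * v.1)) (by fun_prop) measurable_id
  have hs₁ (y : ℝ) : MeasurableSet {v : ℝ × ℝ | v.1 ≤ y} :=
    measurableSet_le measurable_fst measurable_const
  have hs₀ (y : ℝ) : MeasurableSet {v : ℝ × ℝ | v.2 ≤ y} :=
    measurableSet_le measurable_snd measurable_const
  set A : Set (ℝ × ℝ) → Ω → ℝ := fun s => (U ⁻¹' s).indicator fun _ => 1 with hA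
  set W : ℝ → Ω → ℝ := fun y => (fun ω => q (X ω))⁻¹ * (Z * A {v | v.1 ≤ y})
    - (1 - fun ω => q (X ω))⁻¹ * ((1 - Z) * A {v | v.2 ≤ y}) with hW_def
  have hW (y : ℝ) (ω : Ω) : (Z ω / q (X ω) - (1 - Z ω) / (1 - q (X ω)))
      * (if Y ω ≤ y then 1 else 0) = W y ω := by
    have hYU : Y ω = Z ω * (U ω).1 + (1 - Z ω) * (U ω).2 := by simp only [hY, hT, hU_def]; ring
    simpa [hW_def, hA, indicator_apply, hYU] using ipw_weight_mul_ite_le (hZ01 ω)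
  have hD (y : ℝ) (ω : Ω) : ((if Y1 ω ≤ y then (1 : ℝ) else 0) - (if Y0 ω ≤ y then 1 else 0))
      * (T1 ω - T0 ω) = (A {v | v.1 ≤ y} - A {v | v.2 ≤ y}) ω := by
    simpa [hA, indicator_apply] using ite_le_sub_ite_le_mul_sub (hT001 ω) (hT101 ω)
  have hAint (y : ℝ) : Integrable (A {v | v.1 ≤ y} - A {v | v.2 ≤ y}) μ :=
    ((integrable_const 1).indicator (hU (hs₁ y))).sub
      ((integrable_const 1).indicator (hU (hs₀ y)))
  have hWint (y : ℝ) : Integrable (W y) μ :=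
    (integrable_ipw_arms hZ hZ01 (hq.comp hX).aestronglyMeasurable hε hoverlap
      (hU (hs₁ y)) (hU (hs₀ y))).elim .sub
  simp only [hW, hD]
  exact forall_congr' fun y => condExp_comap_ae_eq_zero_iff_forall_integral_mul_ite_le hX
    (hWint y) (hAint y) (condExp_ipw_contrast_ae_eq hZ hZ01 hU hind
      (hq.comp (comap_measurable X)).stronglyMeasurable hqX.symm hε hoverlap (hs₁ y) (hs₀ y))

/-- **Characterization of the null of zero local conditional distribution treatment effect,
no censoring**: under the instrumental-variable assumptions,
`E[(1{Y(1) ≤ y} − 1{Y(0) ≤ y}) · (T(1) − T(0)) | σ(X)] = 0` a.s. for all `y` iff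
`E[(Z/q(X) − (1−Z)/(1−q(X))) · 1{Y ≤ y} · 1{X ≤ x}] = 0` for all `y, x`. -/
theorem zero_local_conditional_DTE_characterization
    {Ω : Type*} [MeasurableSpace Ω] [StandardBorelSpace Ω] [Nonempty Ω]
    (μ : Measure Ω) [IsProbabilityMeasure μ] {k : ℕ}
    (X : Ω → (Fin k → ℝ)) (hX : Measurable X)
    (Z : Ω → ℝ) (hZ : Measurable Z) (hZ01 : ∀ ω, Z ω = 0 ∨ Z ω = 1)
    (T0 T1 : Ω → ℝ) (hT0 : Measurable T0) (hT1 : Measurable T1)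
    (hT001 : ∀ ω, T0 ω = 0 ∨ T0 ω = 1) (hT101 : ∀ ω, T1 ω = 0 ∨ T1 ω = 1)
    (Y0 Y1 : Ω → ℝ) (hY0 : Measurable Y0) (hY1 : Measurable Y1)
    (T : Ω → ℝ) (hT : ∀ ω, T ω = Z ω * T1 ω + (1 - Z ω) * T0 ω)
    (Y : Ω → ℝ) (hY : ∀ ω, Y ω = T ω * Y1 ω + (1 - T ω) * Y0 ω)
    (hiv : CondIndepFun (MeasurableSpace.comap X inferInstance) hX.comap_le
      (fun ω => (Y0 ω, Y1 ω, T0 ω, T1 ω)) Z μ)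
    (ε : ℝ) (hε : 0 < ε) (hε2 : ε ≤ 1 / 2)
    (q : (Fin k → ℝ) → ℝ) (hq : Measurable q)
    (hqX : (fun ω => q (X ω)) =ᵐ[μ] μ[Z | MeasurableSpace.comap X inferInstance])
    (hoverlap : ∀ᵐ ω ∂μ, ε ≤ q (X ω) ∧ q (X ω) ≤ 1 - ε)
    (hmono : ∀ᵐ ω ∂μ, T0 ω ≤ T1 ω) :
    (∀ y : ℝ,
        μ[(fun ω => ((if Y1 ω ≤ y then (1 : ℝ) else 0) - (if Y0 ω ≤ y then (1 : ℝ) else 0))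
              * (T1 ω - T0 ω)) | MeasurableSpace.comap X inferInstance]
          =ᵐ[μ] (0 : Ω → ℝ))
      ↔
    (∀ (y : ℝ) (x : Fin k → ℝ),
        (∫ ω, (Z ω / q (X ω) - (1 - Z ω) / (1 - q (X ω)))
            * (if Y ω ≤ y then (1 : ℝ) else 0)
            * (if ∀ j, X ω j ≤ x j then (1 : ℝ) else 0) ∂μ) = 0) :=
  zero_local_conditional_DTE_characterization_general μ X hX Z hZ hZ01 T0 T1 hT0 hT1 hT001 hT101 Y0
    Y1 hY0 hY1 T hT Y hY hiv ε hε q hq hqX hoverlap
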